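/- Soundness of the abduction-to-weak-constraints translation: for every best model M of the translated program lpw(𝒫) of a PAP 𝒫 = ⟨H, P, O, γ⟩, the set M ∩ H is an optimal solution of 𝒫. -/
import Mathlib


/-- A propositional logic-program rule `head :- pos, not neg`.
`head = none` represents a strong constraint (rule with empty head). -/
structure LPRule where
  head : Option ℕ
  pos : Finset ℕ
  neg : Finset ℕ
deriving DecidableEq

namespace LP

/-- Truth of a rule head w.r.t. an interpretation; an empty head is never true. -/
def headTrue (I : Set ℕ) : Option ℕ → Prop
  | none => False
  | some a => a ∈ I

/-- The body of a rule is true w.r.t. `I`. -/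
def bodyTrue (I : Set ℕ) (r : LPRule) : Prop :=
  (∀ b ∈ r.pos, b ∈ I) ∧ (∀ b ∈ r.neg, b ∉ I)

/-- `I` satisfies rule `r`. -/
def satRule (I : Set ℕ) (r : LPRule) : Prop := bodyTrue I r → headTrue I r.head

/-- `I` is a model of the program `P`. -/
def isModel (P : Set LPRule) (I : Set ℕ) : Prop := ∀ r ∈ P, satRule I r

/-- A positive (negation-free) program. -/
def isPositive (P : Set LPRule) : Prop := ∀ r ∈ P, r.neg = ∅

/-- A constraint-free program (no rules with empty head). -/
def constraintFree (P : Set LPRule) : Prop := ∀ r ∈ P, r.head ≠ none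

/-- The Gelfond-Lifschitz reduct `P^I`. -/
def reduct (P : Set LPRule) (I : Set ℕ) : Set LPRule :=
  (fun r => LPRule.mk r.head r.pos ∅) '' {r ∈ P | ∀ b ∈ r.neg, b ∉ I}

/-- `M` is the least model of `P`. -/
def isLeastModel (P : Set LPRule) (M : Set ℕ) : Prop :=
  isModel P M ∧ ∀ M', isModel P M' → M ⊆ M'

/-- `M` is a stable model of `P`: it is the least model of the reduct `P^M`. -/
def isStable (P : Set LPRule) (M : Set ℕ) : Prop := isLeastModel (reduct P M) M

/-- `facts S` is the set of facts `{p :- | p ∈ S}`. -/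
def facts (S : Set ℕ) : Set LPRule := (fun p => LPRule.mk (some p) ∅ ∅) '' S

/-- The atoms occurring in a rule. -/
def ruleAtoms (r : LPRule) : Set ℕ := {a | r.head = some a} ∪ ↑r.pos ∪ ↑r.neg

/-- The Herbrand base of a program: all atoms occurring in it. -/
def atoms (P : Set LPRule) : Set ℕ := ⋃ r ∈ P, ruleAtoms r

/-- `p` depends on `q`: some rule has head `p` and `q` in its body. -/
def dependsOn (P : Set LPRule) (p q : ℕ) : Prop :=
  ∃ r ∈ P, r.head = some p ∧ (q ∈ r.pos ∨ q ∈ r.neg)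

/-- `P` is stratified: no rule with head `p` and `not q` in the body where
`q` transitively depends on `p`. -/
def stratified (P : Set LPRule) : Prop :=
  ∀ r ∈ P, ∀ p, r.head = some p → ∀ q ∈ r.neg, ¬ Relation.TransGen (dependsOn P) q p

/-- Hypotheses `H` do not occur in rule heads of `P`. -/
def hypFree (P : Set LPRule) (H : Finset ℕ) : Prop :=
  ∀ r ∈ P, ∀ h ∈ H, r.head ≠ some h

/-- `S` is an admissible solution: `S ⊆ H` and some stable model of
`P ∪ facts S` makes all observations true. -/
def admissible (P : Set LPRule) (H obsP obsN : Finset ℕ) (S : Set ℕ) : Prop :=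
  S ⊆ ↑H ∧ ∃ M, isStable (P ∪ facts S) M ∧ (∀ o ∈ obsP, o ∈ M) ∧ (∀ o ∈ obsN, o ∉ M)

/-- `sum_γ`: total penalty of the hypotheses of `H` belonging to `S`. -/
noncomputable def cost (γ : ℕ → NNReal) (H : Finset ℕ) (S : Set ℕ) : NNReal :=
  ∑ h ∈ H, S.indicator γ h

/-- `S` is an optimal solution: admissible with minimal total penalty. -/
def optimal (P : Set LPRule) (H obsP obsN : Finset ℕ) (γ : ℕ → NNReal) (S : Set ℕ) : Prop :=
  admissible P H obsP obsN S ∧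
  ∀ S', admissible P H obsP obsN S' → cost γ H S ≤ cost γ H S'

end LP

namespace LP

/-- `P2` potentially uses `P1`: no head atom of `P2` occurs in `P1`. -/
def potentiallyUses (P2 P1 : Set LPRule) : Prop :=
  ∀ r ∈ P2, ∀ a, r.head = some a → a ∉ atoms P1

/-- The translated program `lpw(𝒫)`: the original program `P`, the guessing rules
`h :- sol h`, `sol h :- not nsol h`, `nsol h :- not sol h` for each hypothesis `h ∈ H`,
and the strong constraints `:- not a` (resp. `:- a`) for positive (resp. negative)
observations. -/
def lpw (P : Set LPRule) (H obsP obsN : Finset ℕ) (sol nsol : ℕ → ℕ) : Set LPRule :=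
  P ∪ (⋃ h ∈ (↑H : Set ℕ),
        {LPRule.mk (some h) {sol h} ∅,
         LPRule.mk (some (sol h)) ∅ {nsol h},
         LPRule.mk (some (nsol h)) ∅ {sol h}})
    ∪ ((fun a => LPRule.mk none ∅ {a}) '' ↑obsP)
    ∪ ((fun a => LPRule.mk none {a} ∅) '' ↑obsN)

/-- The atoms `sol h` and `nsol h` are pairwise distinct fresh atoms not occurring
in `P`, `H`, or among the observations. -/
def freshAtoms (P : Set LPRule) (H obsP obsN : Finset ℕ) (sol nsol : ℕ → ℕ) : Prop :=
  Function.Injective sol ∧ Function.Injective nsol ∧ (∀ h h', sol h ≠ nsol h') ∧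
  ∀ h ∈ H, sol h ∉ atoms P ∪ ↑H ∪ ↑obsP ∪ ↑obsN ∧
           nsol h ∉ atoms P ∪ ↑H ∪ ↑obsP ∪ ↑obsN

/-- The total weak-constraint penalty of a model `M`: the weak constraint `:~ h [γ(h)]`
is violated by `M` iff `h ∈ M`, so the penalty is the sum of `γ(h)` over `h ∈ H ∩ M`. -/
noncomputable def penalty (γ : ℕ → NNReal) (H : Finset ℕ) (M : Set ℕ) : NNReal :=
  cost γ H M

/-- `M` is a best model of the translated program: a stable model (which in particular
satisfies all strong constraints) minimizing the total weight of violated weak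
constraints. -/
def isBest (P : Set LPRule) (H obsP obsN : Finset ℕ) (γ : ℕ → NNReal)
    (sol nsol : ℕ → ℕ) (M : Set ℕ) : Prop :=
  isStable (lpw P H obsP obsN sol nsol) M ∧
  ∀ M', isStable (lpw P H obsP obsN sol nsol) M' → penalty γ H M ≤ penalty γ H M'

end LP

namespace LP

@[simp] lemma headTrue_some {I : Set ℕ} {a : ℕ} : headTrue I (some a) ↔ a ∈ I := Iff.rfl
@[simp] lemma headTrue_none {I : Set ℕ} : headTrue I none ↔ False := Iff.rfl

lemma headTrue_mono' {I J : Set ℕ} {o : Option ℕ} (h : headTrue I o)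
    (hsub : ∀ a, o = some a → a ∈ I → a ∈ J) : headTrue J o := by
  cases o with
  | none => exact h.elim
  | some a => exact hsub a rfl h

lemma mem_reduct {P : Set LPRule} {I : Set ℕ} {r' : LPRule} :
    r' ∈ reduct P I ↔ ∃ r ∈ P, (∀ b ∈ r.neg, b ∉ I) ∧ r' = LPRule.mk r.head r.pos ∅ := by
  simp only [reduct, Set.mem_image, Set.mem_setOf_eq]
  constructor
  · rintro ⟨r, ⟨h1, h2⟩, rfl⟩; exact ⟨r, h1, h2, rfl⟩
  · rintro ⟨r, h1, h2, rfl⟩; exact ⟨r, ⟨h1, h2⟩, rfl⟩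

lemma reduct_union (P Q : Set LPRule) (I : Set ℕ) :
    reduct (P ∪ Q) I = reduct P I ∪ reduct Q I := by
  ext r'
  simp only [mem_reduct, Set.mem_union]
  constructor
  · rintro ⟨r, h1 | h1, h2, h3⟩
    · exact Or.inl ⟨r, h1, h2, h3⟩
    · exact Or.inr ⟨r, h1, h2, h3⟩
  · rintro (⟨r, h1, h2, h3⟩ | ⟨r, h1, h2, h3⟩)
    exacts [⟨r, Or.inl h1, h2, h3⟩, ⟨r, Or.inr h1, h2, h3⟩]

lemma reduct_subset {P Q : Set LPRule} (h : P ⊆ Q) (I : Set ℕ) :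
    reduct P I ⊆ reduct Q I := by
  intro r' hr'
  obtain ⟨r, h1, h2, h3⟩ := mem_reduct.mp hr'
  exact mem_reduct.mpr ⟨r, h h1, h2, h3⟩

lemma reduct_facts (S : Set ℕ) (I : Set ℕ) : reduct (facts S) I = facts S := by
  ext r'
  simp only [mem_reduct, facts, Set.mem_image]
  constructor
  · rintro ⟨r, ⟨p, hp, rfl⟩, -, rfl⟩; exact ⟨p, hp, rfl⟩
  · rintro ⟨p, hp, rfl⟩
    exact ⟨LPRule.mk (some p) ∅ ∅, ⟨p, hp, rfl⟩, by simp, rfl⟩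

lemma reduct_positive (P : Set LPRule) (I : Set ℕ) : isPositive (reduct P I) := by
  rintro r' hr'
  obtain ⟨r, -, -, rfl⟩ := mem_reduct.mp hr'
  rfl

lemma facts_positive (S : Set ℕ) : isPositive (facts S) := by
  rintro r ⟨p, hp, rfl⟩
  rfl

lemma model_inter {R : Set LPRule} (hpos : isPositive R) {I J : Set ℕ}
    (hI : isModel R I) (hJ : isModel R J) : isModel R (I ∩ J) := by
  intro r hr hb
  have hI' : headTrue I r.head := hI r hr ⟨fun b hbb => (hb.1 b hbb).1, by simp [hpos r hr]⟩
  have hJ' : headTrue J r.head := hJ r hr ⟨fun b hbb => (hb.1 b hbb).2, by simp [hpos r hr]⟩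
  exact headTrue_mono' hI' (fun a ha haI => ⟨haI, by rw [ha] at hJ'; exact hJ'⟩)

lemma least_heads {R : Set LPRule} {M : Set ℕ} (hpos : isPositive R)
    (hL : isLeastModel R M) : ∀ a ∈ M, ∃ r ∈ R, r.head = some a ∧ bodyTrue M r := by
  intro a ha
  by_contra hcon
  push_neg at hcon
  have hmod : isModel R (M \ {a}) := by
    intro r hr hb
    have hbM : bodyTrue M r := ⟨fun b hbb => (hb.1 b hbb).1, by simp [hpos r hr]⟩
    have hh := hL.1 r hr hbM
    refine headTrue_mono' hh (fun c hc hcM => ⟨hcM, ?_⟩)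
    intro hca
    rw [Set.mem_singleton_iff] at hca
    subst hca
    exact hcon r hr hc hbM
  exact (hL.2 _ hmod ha).2 rfl

lemma head_mem_atoms {P : Set LPRule} {r : LPRule} {a : ℕ} (hr : r ∈ P)
    (h : r.head = some a) : a ∈ atoms P :=
  Set.mem_biUnion hr (Or.inl (Or.inl h))

lemma pos_mem_atoms {P : Set LPRule} {r : LPRule} {b : ℕ} (hr : r ∈ P)
    (h : b ∈ r.pos) : b ∈ atoms P :=
  Set.mem_biUnion hr (Or.inl (Or.inr h))

lemma neg_mem_atoms {P : Set LPRule} {r : LPRule} {b : ℕ} (hr : r ∈ P)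
    (h : b ∈ r.neg) : b ∈ atoms P :=
  Set.mem_biUnion hr (Or.inr h)

lemma mem_lpw {P : Set LPRule} {H obsP obsN : Finset ℕ} {sol nsol : ℕ → ℕ} {r : LPRule} :
    r ∈ lpw P H obsP obsN sol nsol ↔
      r ∈ P ∨
      (∃ h ∈ H, r = LPRule.mk (some h) {sol h} ∅ ∨ r = LPRule.mk (some (sol h)) ∅ {nsol h} ∨
        r = LPRule.mk (some (nsol h)) ∅ {sol h}) ∨
      (∃ a ∈ obsP, r = LPRule.mk none ∅ {a}) ∨
      (∃ a ∈ obsN, r = LPRule.mk none {a} ∅) := by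
  constructor
  · intro hr
    rcases hr with ((hr | hr) | hr) | hr
    · exact Or.inl hr
    · simp only [Set.mem_iUnion, Set.mem_insert_iff, Set.mem_singleton_iff, exists_prop,
        Finset.mem_coe] at hr
      obtain ⟨h, hh, hc⟩ := hr
      exact Or.inr (Or.inl ⟨h, hh, hc⟩)
    · obtain ⟨a, ha, rfl⟩ := hr
      exact Or.inr (Or.inr (Or.inl ⟨a, ha, rfl⟩))
    · obtain ⟨a, ha, rfl⟩ := hr
      exact Or.inr (Or.inr (Or.inr ⟨a, ha, rfl⟩))
  · rintro (hr | ⟨h, hh, hc⟩ | ⟨a, ha, rfl⟩ | ⟨a, ha, rfl⟩)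
    · exact Or.inl (Or.inl (Or.inl hr))
    · refine Or.inl (Or.inl (Or.inr ?_))
      simp only [Set.mem_iUnion, Set.mem_insert_iff, Set.mem_singleton_iff, exists_prop,
        Finset.mem_coe]
      exact ⟨h, hh, hc⟩
    · exact Or.inl (Or.inr ⟨a, Finset.mem_coe.mpr ha, rfl⟩)
    · exact Or.inr ⟨a, Finset.mem_coe.mpr ha, rfl⟩

end LP

namespace LP

lemma stable_admissible {P : Set LPRule} {H obsP obsN : Finset ℕ} {sol nsol : ℕ → ℕ}
    (hHyp : hypFree P H) (hFresh : freshAtoms P H obsP obsN sol nsol)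
    {M : Set ℕ} (hM : isStable (lpw P H obsP obsN sol nsol) M) :
    admissible P H obsP obsN (M ∩ ↑H) := by
  obtain ⟨solInj, nsolInj, solNns, hfr⟩ := hFresh
  have hfr' : ∀ h ∈ H, sol h ∉ atoms P ∧ sol h ∉ H ∧ sol h ∉ obsP ∧ sol h ∉ obsN ∧
      nsol h ∉ atoms P ∧ nsol h ∉ H ∧ nsol h ∉ obsP ∧ nsol h ∉ obsN := by
    intro h hh
    obtain ⟨h1, h2⟩ := hfr h hh
    simp only [Set.mem_union, Finset.mem_coe, not_or] at h1 h2
    exact ⟨h1.1.1.1, h1.1.1.2, h1.1.2, h1.2, h2.1.1.1, h2.1.1.2, h2.1.2, h2.2⟩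
  set Q := lpw P H obsP obsN sol nsol with hQdef
  have hmod : isModel (reduct Q M) M := hM.1
  set sn : Set ℕ := sol '' ↑H ∪ nsol '' ↑H with hsn
  have hnim : ∀ b, (b ∈ atoms P ∨ b ∈ H ∨ b ∈ obsP ∨ b ∈ obsN) → b ∉ sn := by
    rintro b hb (⟨h, hh, rfl⟩ | ⟨h, hh, rfl⟩)
    · obtain ⟨h1, h2, h3, h4, -⟩ := hfr' h (Finset.mem_coe.mp hh)
      rcases hb with hb | hb | hb | hb
      exacts [h1 hb, h2 hb, h3 hb, h4 hb]
    · obtain ⟨-, -, -, -, h1, h2, h3, h4⟩ := hfr' h (Finset.mem_coe.mp hh)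
      rcases hb with hb | hb | hb | hb
      exacts [h1 hb, h2 hb, h3 hb, h4 hb]
  have hobsP : ∀ a ∈ obsP, a ∈ M := by
    intro a ha
    by_contra haM
    have hrQ : LPRule.mk none ∅ {a} ∈ Q := mem_lpw.mpr (Or.inr (Or.inr (Or.inl ⟨a, ha, rfl⟩)))
    have hred : LPRule.mk none ∅ ∅ ∈ reduct Q M :=
      mem_reduct.mpr ⟨_, hrQ, by simpa using haM, rfl⟩
    exact hmod _ hred ⟨by simp, by simp⟩
  have hobsN : ∀ a ∈ obsN, a ∉ M := by
    intro a ha haM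
    have hrQ : LPRule.mk none {a} ∅ ∈ Q := mem_lpw.mpr (Or.inr (Or.inr (Or.inr ⟨a, ha, rfl⟩)))
    have hred : LPRule.mk none {a} ∅ ∈ reduct Q M :=
      mem_reduct.mpr ⟨_, hrQ, by simp, rfl⟩
    exact hmod _ hred ⟨by simpa using haM, by simp⟩
  have hsolM : ∀ h ∈ H, nsol h ∉ M → sol h ∈ M := by
    intro h hh hns
    have hrQ : LPRule.mk (some (sol h)) ∅ {nsol h} ∈ Q :=
      mem_lpw.mpr (Or.inr (Or.inl ⟨h, hh, Or.inr (Or.inl rfl)⟩))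
    have hred : LPRule.mk (some (sol h)) ∅ ∅ ∈ reduct Q M :=
      mem_reduct.mpr ⟨_, hrQ, by simpa using hns, rfl⟩
    exact hmod _ hred ⟨by simp, by simp⟩
  have hnsolM : ∀ h ∈ H, sol h ∉ M → nsol h ∈ M := by
    intro h hh hs
    have hrQ : LPRule.mk (some (nsol h)) ∅ {sol h} ∈ Q :=
      mem_lpw.mpr (Or.inr (Or.inl ⟨h, hh, Or.inr (Or.inr rfl)⟩))
    have hred : LPRule.mk (some (nsol h)) ∅ ∅ ∈ reduct Q M :=
      mem_reduct.mpr ⟨_, hrQ, by simpa using hs, rfl⟩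
    exact hmod _ hred ⟨by simp, by simp⟩
  have hsol_h : ∀ h ∈ H, sol h ∈ M → h ∈ M := by
    intro h hh hs
    have hrQ : LPRule.mk (some h) {sol h} ∅ ∈ Q :=
      mem_lpw.mpr (Or.inr (Or.inl ⟨h, hh, Or.inl rfl⟩))
    have hred : LPRule.mk (some h) {sol h} ∅ ∈ reduct Q M :=
      mem_reduct.mpr ⟨_, hrQ, by simp, rfl⟩
    exact hmod _ hred ⟨by simpa using hs, by simp⟩
  set S : Set ℕ := M ∩ ↑H with hSdef
  set N : Set ℕ := M \ sn with hNdef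
  have hNM : N ⊆ M := Set.diff_subset
  have hSN : S ⊆ N := by
    rintro x ⟨hxM, hxH⟩
    exact ⟨hxM, hnim x (Or.inr (Or.inl (Finset.mem_coe.mp hxH)))⟩
  have hredPN : reduct P N = reduct P M := by
    ext r'
    simp only [mem_reduct]
    constructor <;> rintro ⟨r, hrP, hneg, rfl⟩ <;> refine ⟨r, hrP, fun b hb => ?_, rfl⟩
    · intro hbM
      exact hneg b hb ⟨hbM, hnim b (Or.inl (neg_mem_atoms hrP hb))⟩
    · intro hbN
      exact hneg b hb hbN.1
  have hR2 : reduct (P ∪ facts S) N = reduct P M ∪ facts S := by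
    rw [reduct_union, reduct_facts, hredPN]
  have hposR : isPositive (reduct P M ∪ facts S) := by
    rintro r (hr | hr)
    · exact reduct_positive P M r hr
    · exact facts_positive S r hr
  have hNmod : isModel (reduct P M ∪ facts S) N := by
    rintro r' (hr' | hr') hb
    · obtain ⟨r, hrP, hneg, rfl⟩ := mem_reduct.mp hr'
      have hbM : bodyTrue M (LPRule.mk r.head r.pos ∅) :=
        ⟨fun b hbb => hNM (hb.1 b hbb), by simp⟩
      have hhd := hmod _ (mem_reduct.mpr ⟨r, mem_lpw.mpr (Or.inl hrP), hneg, rfl⟩) hbM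
      exact headTrue_mono' hhd fun a ha haM =>
        ⟨haM, hnim a (Or.inl (head_mem_atoms hrP ha))⟩
    · obtain ⟨p, hp, rfl⟩ := hr'
      exact hSN hp
  have hNleast : ∀ N', isModel (reduct P M ∪ facts S) N' → N ⊆ N' := by
    intro N' hN'
    have hN2 : isModel (reduct P M ∪ facts S) (N' ∩ N) := model_inter hposR hN' hNmod
    set K : Set ℕ := (N' ∩ N) ∪ (M ∩ sn) with hKdef
    have hKmod : isModel (reduct Q M) K := by
      intro r' hr' hb
      obtain ⟨r, hrQ, hneg, rfl⟩ := mem_reduct.mp hr'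
      rcases mem_lpw.mp hrQ with hrP | ⟨h, hh, hc | hc | hc⟩ | ⟨a, ha, rfl⟩ | ⟨a, ha, rfl⟩
      · have hbN2 : bodyTrue (N' ∩ N) (LPRule.mk r.head r.pos ∅) := by
          refine ⟨fun b hbb => ?_, by simp⟩
          rcases hb.1 b hbb with hb1 | hb2
          · exact hb1
          · exact absurd hb2.2 (hnim b (Or.inl (pos_mem_atoms hrP hbb)))
        have hhd := hN2 _ (Or.inl (mem_reduct.mpr ⟨r, hrP, hneg, rfl⟩)) hbN2
        exact headTrue_mono' hhd fun a ha haN2 => Or.inl haN2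
      · subst hc
        have hsK : sol h ∈ K := hb.1 (sol h) (by simp)
        have hsM : sol h ∈ M := by
          rcases hsK with h1 | h2
          · exact absurd (Set.mem_union_left _
              (Set.mem_image_of_mem sol (Finset.mem_coe.mpr hh))) h1.2.2
          · exact h2.1
        have hhS : h ∈ S := ⟨hsol_h h hh hsM, Finset.mem_coe.mpr hh⟩
        have hhN2 : h ∈ N' ∩ N := hN2 _ (Or.inr ⟨h, hhS, rfl⟩) ⟨by simp, by simp⟩
        exact Or.inl hhN2
      · subst hc
        have hns : nsol h ∉ M := hneg (nsol h) (by simp)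
        have hsM : sol h ∈ M := hsolM h hh hns
        exact Or.inr ⟨hsM, Set.mem_union_left _
          (Set.mem_image_of_mem sol (Finset.mem_coe.mpr hh))⟩
      · subst hc
        have hs : sol h ∉ M := hneg (sol h) (by simp)
        have hnsM : nsol h ∈ M := hnsolM h hh hs
        exact Or.inr ⟨hnsM, Set.mem_union_right _
          (Set.mem_image_of_mem nsol (Finset.mem_coe.mpr hh))⟩
      · exact absurd (hobsP a ha) (hneg a (by simp))
      · have haK : a ∈ K := hb.1 a (by simp)
        have haM : a ∈ M := by
          rcases haK with h1 | h2
          · exact hNM h1.2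
          · exact h2.1
        exact hobsN a ha haM
    have hMK : M ⊆ K := hM.2 K hKmod
    intro x hx
    rcases hMK hx.1 with h1 | h2
    · exact h1.1
    · exact absurd h2.2 hx.2
  refine ⟨Set.inter_subset_right, N, ?_, ?_, ?_⟩
  · show isLeastModel (reduct (P ∪ facts S) N) N
    rw [hR2]
    exact ⟨hNmod, hNleast⟩
  · intro o ho
    exact ⟨hobsP o ho, hnim o (Or.inr (Or.inr (Or.inl ho)))⟩
  · intro o ho hoN
    exact hobsN o ho (hNM hoN)

end LP

namespace LP

lemma admissible_stable {P : Set LPRule} {H obsP obsN : Finset ℕ} {sol nsol : ℕ → ℕ}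
    (hHyp : hypFree P H) (hFresh : freshAtoms P H obsP obsN sol nsol)
    {S : Set ℕ} (hS : admissible P H obsP obsN S) :
    ∃ M', isStable (lpw P H obsP obsN sol nsol) M' ∧ ∀ h ∈ H, (h ∈ M' ↔ h ∈ S) := by
  obtain ⟨hSH, N, hNst, hNobsP, hNobsN⟩ := hS
  obtain ⟨solInj, nsolInj, solNns, hfr⟩ := hFresh
  have hfr' : ∀ h ∈ H, sol h ∉ atoms P ∧ sol h ∉ H ∧ sol h ∉ obsP ∧ sol h ∉ obsN ∧
      nsol h ∉ atoms P ∧ nsol h ∉ H ∧ nsol h ∉ obsP ∧ nsol h ∉ obsN := by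
    intro h hh
    obtain ⟨h1, h2⟩ := hfr h hh
    simp only [Set.mem_union, Finset.mem_coe, not_or] at h1 h2
    exact ⟨h1.1.1.1, h1.1.1.2, h1.1.2, h1.2, h2.1.1.1, h2.1.1.2, h2.1.2, h2.2⟩
  set Q := lpw P H obsP obsN sol nsol with hQdef
  have hR2 : reduct (P ∪ facts S) N = reduct P N ∪ facts S := by
    rw [reduct_union, reduct_facts]
  have hNmod : isModel (reduct P N ∪ facts S) N := by rw [← hR2]; exact hNst.1
  have hNleast : ∀ K, isModel (reduct P N ∪ facts S) K → N ⊆ K := by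
    intro K hK
    exact hNst.2 K (by rwa [hR2])
  have hSN : S ⊆ N := by
    intro p hp
    exact hNmod _ (Or.inr ⟨p, hp, rfl⟩) ⟨by simp, by simp⟩
  have hheadsN := least_heads (reduct_positive (P ∪ facts S) N) hNst
  have hNsub : ∀ a ∈ N, a ∈ atoms P ∨ a ∈ S := by
    intro a ha
    obtain ⟨r', hr', hhd, -⟩ := hheadsN a ha
    obtain ⟨r, hrPF, -, rfl⟩ := mem_reduct.mp hr'
    rcases hrPF with hrP | ⟨p, hp, rfl⟩
    · exact Or.inl (head_mem_atoms hrP hhd)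
    · have hpa : p = a := by simpa using hhd
      exact Or.inr (hpa ▸ hp)
  have hNH : ∀ h ∈ H, (h ∈ N ↔ h ∈ S) := by
    intro h hh
    constructor
    · intro hN
      obtain ⟨r', hr', hhd, -⟩ := hheadsN h hN
      obtain ⟨r, hrPF, -, rfl⟩ := mem_reduct.mp hr'
      rcases hrPF with hrP | ⟨p, hp, rfl⟩
      · exact absurd hhd (hHyp r hrP h hh)
      · have hpa : p = h := by simpa using hhd
        exact hpa ▸ hp
    · exact fun h' => hSN h'
  have hsolN : ∀ h ∈ H, sol h ∉ N := by
    intro h hh hn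
    rcases hNsub _ hn with h1 | h1
    · exact (hfr' h hh).1 h1
    · exact (hfr' h hh).2.1 (Finset.mem_coe.mp (hSH h1))
  have hnsolN : ∀ h ∈ H, nsol h ∉ N := by
    intro h hh hn
    rcases hNsub _ hn with h1 | h1
    · exact (hfr' h hh).2.2.2.2.1 h1
    · exact (hfr' h hh).2.2.2.2.2.1 (Finset.mem_coe.mp (hSH h1))
  set M' : Set ℕ := N ∪ sol '' S ∪ nsol '' (↑H \ S) with hM'def
  have hNM' : N ⊆ M' := fun x hx => Or.inl (Or.inl hx)
  have hsolM' : ∀ h ∈ H, (sol h ∈ M' ↔ h ∈ S) := by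
    intro h hh
    constructor
    · rintro ((h1 | ⟨x, hx, he⟩) | ⟨x, hx, he⟩)
      · exact absurd h1 (hsolN h hh)
      · exact solInj he ▸ hx
      · exact absurd he.symm (solNns h x)
    · intro hs
      exact Or.inl (Or.inr ⟨h, hs, rfl⟩)
  have hnsolM' : ∀ h ∈ H, (nsol h ∈ M' ↔ h ∉ S) := by
    intro h hh
    constructor
    · rintro ((h1 | ⟨x, hx, he⟩) | ⟨x, hx, he⟩)
      · exact absurd h1 (hnsolN h hh)
      · exact absurd he (solNns x h)
      · exact (nsolInj he ▸ hx).2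
    · intro hns
      exact Or.inr ⟨h, ⟨Finset.mem_coe.mpr hh, hns⟩, rfl⟩
  have hnonfresh : ∀ b, (b ∈ atoms P ∨ b ∈ H ∨ b ∈ obsP ∨ b ∈ obsN) → (b ∈ M' ↔ b ∈ N) := by
    intro b hb
    constructor
    · rintro ((h1 | ⟨x, hx, rfl⟩) | ⟨x, hx, rfl⟩)
      · exact h1
      · obtain ⟨h1, h2, h3, h4, -⟩ := hfr' x (Finset.mem_coe.mp (hSH hx))
        rcases hb with hb | hb | hb | hb
        exacts [(h1 hb).elim, (h2 hb).elim, (h3 hb).elim, (h4 hb).elim]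
      · obtain ⟨-, -, -, -, h1, h2, h3, h4⟩ := hfr' x (Finset.mem_coe.mp hx.1)
        rcases hb with hb | hb | hb | hb
        exacts [(h1 hb).elim, (h2 hb).elim, (h3 hb).elim, (h4 hb).elim]
    · exact fun h' => hNM' h'
  have hredP : reduct P M' = reduct P N := by
    ext r'
    simp only [mem_reduct]
    constructor <;> rintro ⟨r, hrP, hneg, rfl⟩ <;>
      refine ⟨r, hrP, fun b hb hbmem => ?_, rfl⟩
    · exact hneg b hb ((hnonfresh b (Or.inl (neg_mem_atoms hrP hb))).mpr hbmem)
    · exact hneg b hb ((hnonfresh b (Or.inl (neg_mem_atoms hrP hb))).mp hbmem)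
  have hM'mod : isModel (reduct Q M') M' := by
    intro r' hr' hb
    obtain ⟨r, hrQ, hneg, rfl⟩ := mem_reduct.mp hr'
    rcases mem_lpw.mp hrQ with hrP | ⟨h, hh, hc | hc | hc⟩ | ⟨a, ha, rfl⟩ | ⟨a, ha, rfl⟩
    · have hnegN : ∀ b ∈ r.neg, b ∉ N := fun b hbb hbN =>
        hneg b hbb ((hnonfresh b (Or.inl (neg_mem_atoms hrP hbb))).mpr hbN)
      have hbN : bodyTrue N (LPRule.mk r.head r.pos ∅) := by
        refine ⟨fun b hbb => ?_, by simp⟩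
        exact (hnonfresh b (Or.inl (pos_mem_atoms hrP hbb))).mp (hb.1 b hbb)
      have hhd := hNmod _ (Or.inl (mem_reduct.mpr ⟨r, hrP, hnegN, rfl⟩)) hbN
      exact headTrue_mono' hhd fun a ha haN => hNM' haN
    · subst hc
      have hsM' : sol h ∈ M' := hb.1 (sol h) (by simp)
      exact hNM' (hSN ((hsolM' h hh).mp hsM'))
    · subst hc
      have hns : nsol h ∉ M' := hneg (nsol h) (by simp)
      have hhS : h ∈ S := by
        by_contra hc2
        exact hns ((hnsolM' h hh).mpr hc2)
      exact (hsolM' h hh).mpr hhS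
    · subst hc
      have hs : sol h ∉ M' := hneg (sol h) (by simp)
      exact (hnsolM' h hh).mpr (fun hhS => hs ((hsolM' h hh).mpr hhS))
    · exact absurd ((hnonfresh a (Or.inr (Or.inr (Or.inl ha)))).mpr (hNobsP a ha))
        (hneg a (by simp))
    · have haM' : a ∈ M' := hb.1 a (by simp)
      exact hNobsN a ha ((hnonfresh a (Or.inr (Or.inr (Or.inr ha)))).mp haM')
  have hM'least : ∀ K, isModel (reduct Q M') K → M' ⊆ K := by
    intro K hK
    have hsolK : ∀ h, h ∈ S → sol h ∈ K := by
      intro h hs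
      have hh : h ∈ H := Finset.mem_coe.mp (hSH hs)
      have hrQ : LPRule.mk (some (sol h)) ∅ {nsol h} ∈ Q :=
        mem_lpw.mpr (Or.inr (Or.inl ⟨h, hh, Or.inr (Or.inl rfl)⟩))
      have hns : nsol h ∉ M' := fun hmem => ((hnsolM' h hh).mp hmem) hs
      exact hK _ (mem_reduct.mpr ⟨_, hrQ, by simpa using hns, rfl⟩) ⟨by simp, by simp⟩
    have hnsolK : ∀ h, h ∈ (↑H : Set ℕ) → h ∉ S → nsol h ∈ K := by
      intro h hhc hns
      have hh : h ∈ H := Finset.mem_coe.mp hhc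
      have hrQ : LPRule.mk (some (nsol h)) ∅ {sol h} ∈ Q :=
        mem_lpw.mpr (Or.inr (Or.inl ⟨h, hh, Or.inr (Or.inr rfl)⟩))
      have hs : sol h ∉ M' := fun hmem => hns ((hsolM' h hh).mp hmem)
      exact hK _ (mem_reduct.mpr ⟨_, hrQ, by simpa using hs, rfl⟩) ⟨by simp, by simp⟩
    have hSK : ∀ h ∈ S, h ∈ K := by
      intro h hs
      have hh : h ∈ H := Finset.mem_coe.mp (hSH hs)
      have hrQ : LPRule.mk (some h) {sol h} ∅ ∈ Q :=
        mem_lpw.mpr (Or.inr (Or.inl ⟨h, hh, Or.inl rfl⟩))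
      exact hK _ (mem_reduct.mpr ⟨_, hrQ, by simp, rfl⟩)
        ⟨by simpa using hsolK h hs, by simp⟩
    have hNK : N ⊆ K := by
      have hmod2 : isModel (reduct P N ∪ facts S) (K ∩ (atoms P ∪ ↑H)) := by
        rintro r' (hr' | hr') hb
        · obtain ⟨r, hrP, hnegN, rfl⟩ := mem_reduct.mp hr'
          have hrred : LPRule.mk r.head r.pos ∅ ∈ reduct Q M' := by
            refine reduct_subset (fun r hr => mem_lpw.mpr (Or.inl hr)) M' ?_
            rw [hredP]
            exact mem_reduct.mpr ⟨r, hrP, hnegN, rfl⟩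
          have hbK : bodyTrue K (LPRule.mk r.head r.pos ∅) :=
            ⟨fun b hbb => (hb.1 b hbb).1, by simp⟩
          have hhd := hK _ hrred hbK
          exact headTrue_mono' hhd fun a ha haK =>
            ⟨haK, Or.inl (head_mem_atoms hrP ha)⟩
        · obtain ⟨p, hp, rfl⟩ := hr'
          exact ⟨hSK p hp, Or.inr (hSH hp)⟩
      exact (hNleast _ hmod2).trans Set.inter_subset_left
    rintro x ((hx | ⟨h, hs, rfl⟩) | ⟨h, hx, rfl⟩)
    · exact hNK hx
    · exact hsolK h hs
    · exact hnsolK h hx.1 hx.2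
  exact ⟨M', ⟨hM'mod, hM'least⟩,
    fun h hh => (hnonfresh h (Or.inr (Or.inl hh))).trans (hNH h hh)⟩

end LP

namespace LP

lemma cost_congr {γ : ℕ → NNReal} {H : Finset ℕ} {S S' : Set ℕ}
    (h : ∀ x ∈ H, (x ∈ S ↔ x ∈ S')) : cost γ H S = cost γ H S' := by
  refine Finset.sum_congr rfl fun x hx => ?_
  by_cases hxS : x ∈ S
  · rw [Set.indicator_of_mem hxS, Set.indicator_of_mem ((h x hx).mp hxS)]
  · rw [Set.indicator_of_notMem hxS,
      Set.indicator_of_notMem (fun c => hxS ((h x hx).mpr c))]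

end LP

/-- soundness: for every best model `M` of `lpw(𝒫)`, the set
`M ∩ H` is an optimal solution of the PAP `𝒫`. -/
theorem lpw_soundness (P : Set LPRule) (hFin : P.Finite)
    (H obsP obsN : Finset ℕ) (γ : ℕ → NNReal) (sol nsol : ℕ → ℕ)
    (hHyp : LP.hypFree P H) (hFresh : LP.freshAtoms P H obsP obsN sol nsol)
    (M : Set ℕ) (hBest : LP.isBest P H obsP obsN γ sol nsol M) :
    LP.optimal P H obsP obsN γ (M ∩ ↑H) := by
  obtain ⟨hMst, hMmin⟩ := hBest
  refine ⟨LP.stable_admissible hHyp hFresh hMst, ?_⟩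
  intro S' hS'
  obtain ⟨M', hM'st, hM'h⟩ := LP.admissible_stable hHyp hFresh hS'
  have h1 : LP.cost γ H (M ∩ ↑H) = LP.penalty γ H M :=
    LP.cost_congr (fun x hx => by simp [hx])
  have h2 : LP.cost γ H S' = LP.penalty γ H M' :=
    LP.cost_congr (fun x hx => (hM'h x hx).symm)
  rw [h1, h2]
  exact hMmin M' hM'st
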